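/- Let y(τ) = −2·arcsin(tanh τ), f > 0, and let u : [−π, π] → ℝ be continuous. For continuous functions T_e : ℝ → ℝ and R : ℝ → ℝ, the Melnikov function M = ∫_{−∞}^{∞} y'(τ)·(T_e(u(y(τ))) − R(u(y(τ))))/f dτ vanishes if and only if ∫_{−π}^{π} T_e(u(y)) dy = ∫_{−π}^{π} R(u(y)) dy. -/

import Mathlib

/-!
Along the heteroclinic orbit, `arcsin (tanh τ) = arctan (sinh τ)` is the Gudermannian function,
whose derivative is `1 / cosh τ` and which maps `ℝ` increasingly onto `(-π/2, π/2)`. Hence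
`y = -2 gd` is a decreasing diffeomorphism of `ℝ` onto `(-π, π)`, and the substitution `s = y(τ)`
turns the Melnikov integral into `-(1/f) ∫_{-π}^{π} (T_e(u s) - R(u s)) ds`.
-/

open Real Set MeasureTheory

noncomputable def gudermannian (τ : ℝ) : ℝ := arctan (sinh τ)

lemma arcsin_tanh (τ : ℝ) : arcsin (tanh τ) = gudermannian τ := by
  rw [gudermannian, arctan_eq_arcsin, add_comm, ← cosh_sq, sqrt_sq (cosh_pos τ).le,
    tanh_eq_sinh_div_cosh]

lemma hasDerivAt_gudermannian (τ : ℝ) : HasDerivAt gudermannian (cosh τ)⁻¹ τ := by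
  refine ((hasDerivAt_arctan (sinh τ)).comp τ (hasDerivAt_sinh τ)).congr_deriv ?_
  rw [add_comm, ← cosh_sq]
  field_simp [(cosh_pos τ).ne']

lemma strictMono_gudermannian : StrictMono gudermannian :=
  arctan_strictMono.comp sinh_strictMono

lemma range_gudermannian : range gudermannian = Ioo (-(π / 2)) (π / 2) := by
  rw [show gudermannian = arctan ∘ sinh from rfl, range_comp, sinh_surjective.range_eq,
    image_univ, range_arctan]

lemma hasDerivAt_neg_two_mul_gudermannian (τ : ℝ) :
    HasDerivAt (fun t => -2 * gudermannian t) (-2 / cosh τ) τ := by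
  simpa only [div_eq_mul_inv] using (hasDerivAt_gudermannian τ).const_mul (-2)

lemma range_neg_two_mul_gudermannian :
    range (fun τ => -2 * gudermannian τ) = Ioo (-π) π := by
  ext s
  constructor
  · rintro ⟨τ, rfl⟩
    have hτ : gudermannian τ ∈ Ioo (-(π / 2)) (π / 2) := range_gudermannian ▸ mem_range_self τ
    constructor <;> linarith [hτ.1, hτ.2]
  · rintro ⟨hs₁, hs₂⟩
    have hs : -s / 2 ∈ range gudermannian := by
      rw [range_gudermannian]
      constructor <;> linarith
    obtain ⟨τ, hτ⟩ := hs
    exact ⟨τ, by linarith⟩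

theorem intervalIntegral_neg_pi_pi_eq_integral_comp_neg_two_mul_gudermannian
    {E : Type*} [NormedAddCommGroup E] [NormedSpace ℝ E] (g : ℝ → E) :
    ∫ s in (-π)..π, g s = ∫ τ, (2 / cosh τ) • g (-2 * gudermannian τ) := by
  have hinj : Function.Injective (fun τ => -2 * gudermannian τ) :=
    (strictMono_gudermannian.const_mul_of_neg (by norm_num)).injective
  have hcov := integral_image_eq_integral_abs_deriv_smul MeasurableSet.univ
    (fun τ _ => (hasDerivAt_neg_two_mul_gudermannian τ).hasDerivWithinAt) hinj.injOn g
  rw [image_univ, range_neg_two_mul_gudermannian, Measure.restrict_univ] at hcov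
  rw [intervalIntegral.integral_of_le (by linarith [pi_pos]), integral_Ioc_eq_integral_Ioo, hcov]
  congr with τ
  rw [abs_div, abs_neg, abs_two, abs_of_pos (cosh_pos τ)]

/-- The Melnikov function ∫ y'(τ)(T_e(u(y(τ))) − R(u(y(τ))))/f dτ along the
heteroclinic orbit y(τ) = −2 arcsin(tanh τ) vanishes if and only if
∫_{−π}^{π} T_e(u(y)) dy = ∫_{−π}^{π} R(u(y)) dy. -/
theorem stmt4 (y : ℝ → ℝ)
    (hy : y = fun τ : ℝ => -2 * Real.arcsin (Real.tanh τ))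
    (f : ℝ) (hf : 0 < f) (u Te R : ℝ → ℝ)
    (hu : ContinuousOn u (Set.Icc (-π) π))
    (hTe : Continuous Te) (hR : Continuous R) :
    (∫ τ : ℝ, deriv y τ * ((Te (u (y τ)) - R (u (y τ))) / f)) = 0 ↔
      (∫ s in (-π)..π, Te (u s)) = ∫ s in (-π)..π, R (u s) := by
  simp only [arcsin_tanh] at hy
  subst hy
  have hIcc : uIcc (-π) π = Icc (-π) π := uIcc_of_le (by linarith [pi_pos])
  have hTei : IntervalIntegrable (fun s => Te (u s)) volume (-π) π :=
    (hTe.comp_continuousOn (hIcc ▸ hu)).intervalIntegrable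
  have hRi : IntervalIntegrable (fun s => R (u s)) volume (-π) π :=
    (hR.comp_continuousOn (hIcc ▸ hu)).intervalIntegrable
  have hM : (∫ τ, deriv (fun t => -2 * gudermannian t) τ *
      ((Te (u (-2 * gudermannian τ)) - R (u (-2 * gudermannian τ))) / f)) =
      -f⁻¹ * ((∫ s in (-π)..π, Te (u s)) - ∫ s in (-π)..π, R (u s)) := by
    rw [← intervalIntegral.integral_sub hTei hRi,
      intervalIntegral_neg_pi_pi_eq_integral_comp_neg_two_mul_gudermannian,
      ← integral_const_mul]
    congr with τ
    rw [(hasDerivAt_neg_two_mul_gudermannian τ).deriv, smul_eq_mul]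
    ring
  rw [hM, mul_eq_zero, sub_eq_zero]
  simp only [neg_eq_zero, inv_eq_zero, hf.ne', false_or]
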